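/- arXiv:2304.08035 — 10 statements merged into one kernel-verified Lean document; each statement's English description precedes it below -/
import Mathlib

section
/- For every α > 0, b > p > 0, and every s ≥ 0, it holds that α·s^{b-p}/(1 + α·s^b) ≤ (p/b)·((b-p)/p)^{(b-p)/b}·α^{p/b}. -/
theorem stmt_2 (α p b : ℝ) (hα : 0 < α) (hp : 0 < p) (hb : p < b) :
    ∀ s : ℝ, 0 ≤ s →
      α * s ^ (b - p) / (1 + α * s ^ b) ≤
        (p / b) * ((b - p) / p) ^ ((b - p) / b) * α ^ (p / b) := by
  intro s hs
  have hb0 : (0:ℝ) < b := hp.trans hb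
  have hbp : (0:ℝ) < b - p := by linarith
  set c : ℝ := (b - p) / b with hc
  set x : ℝ := α * s ^ b with hx
  have hx0 : 0 ≤ x := mul_nonneg hα.le (Real.rpow_nonneg hs b)
  have hden : (0:ℝ) < 1 + x := by linarith
  rw [div_le_iff₀ hden]
  have hc0 : 0 < c := div_pos hbp hb0
  have hc1 : c + p / b = 1 := by rw [hc]; field_simp; ring
  have key : (x * (p / (b - p))) ^ c * (1:ℝ) ^ (p/b) ≤
      c * (x * (p/(b-p))) + (p/b) * 1 :=
    Real.geom_mean_le_arith_mean2_weighted hc0.le (by positivity)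
      (by positivity) zero_le_one hc1
  rw [Real.one_rpow, mul_one, mul_one] at key
  have hK : (0:ℝ) ≤ α ^ (p/b) * ((b-p)/p) ^ c := by positivity
  have key2 := mul_le_mul_of_nonneg_left key hK
  have hL : α ^ (p/b) * ((b-p)/p) ^ c * ((x * (p / (b - p))) ^ c)
      = α * s ^ (b - p) := by
    rw [Real.mul_rpow hx0 (by positivity : (0:ℝ) ≤ p/(b-p)), hx,
        Real.mul_rpow hα.le (Real.rpow_nonneg hs b),
        ← Real.rpow_mul hs]
    have h2 : b * c = b - p := by rw [hc]; field_simp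
    rw [h2]
    rw [show α ^ (p/b) * ((b-p)/p) ^ c * (α ^ c * s ^ (b-p) * (p/(b-p)) ^ c)
        = (α ^ (p/b) * α ^ c) * ((((b-p)/p) ^ c * (p/(b-p)) ^ c)) * s ^ (b-p)
        from by ring]
    rw [← Real.rpow_add hα, ← Real.mul_rpow (by positivity) (by positivity)]
    have h1 : ((b-p)/p : ℝ) * (p/(b-p)) = 1 := by field_simp
    have h4 : p / b + c = 1 := by linarith
    rw [h1, h4, Real.one_rpow, Real.rpow_one, mul_one]
  have h3 : c * (p/(b-p)) = p / b := by
    rw [hc]; field_simp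
  have hR : α ^ (p/b) * ((b-p)/p) ^ c * (c * (x * (p/(b-p))) + p/b)
      = (p / b) * ((b-p)/p) ^ c * α ^ (p/b) * (1 + x) := by
    linear_combination (α ^ (p/b) * ((b-p)/p) ^ c * x) * h3
  calc α * s ^ (b - p)
      = α ^ (p/b) * ((b-p)/p) ^ c * ((x * (p / (b - p))) ^ c) := hL.symm
    _ ≤ α ^ (p/b) * ((b-p)/p) ^ c * (c * (x * (p/(b-p))) + p/b) := key2
    _ = (p / b) * ((b-p)/p) ^ c * α ^ (p/b) * (1 + x) := hR
end

section
/- Let τ > 0, 0 ≤ τ₀ < τ, λ > 0, κ₁ > 0, and suppose ψ : [0,τ] → ℝ is continuous, does not change sign on [0,τ] (i.e., ψ ≥ 0 everywhere or ψ ≤ 0 everywhere), and |ψ(s)| ≥ κ₁ for all s ∈ [τ₀, τ]. Then |∫₀^τ e^{-λ(τ-s)}·(τ-s)·ψ(s) ds| ≥ κ₁·(1 - (1 + λ(τ-τ₀))·e^{-λ(τ-τ₀)})/λ². -/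
open intervalIntegral Real Set

lemma weight_integral (lam τ a b : ℝ) (hlam : 0 < lam) :
    ∫ s in a..b, Real.exp (-lam * (τ - s)) * (τ - s) =
      (Real.exp (-lam * (τ - b)) * ((τ - b) / lam + 1 / lam ^ 2)) -
      (Real.exp (-lam * (τ - a)) * ((τ - a) / lam + 1 / lam ^ 2)) := by
  have h : ∀ s : ℝ, HasDerivAt (fun s => Real.exp (-lam * (τ - s)) * ((τ - s) / lam + 1 / lam ^ 2))
      (Real.exp (-lam * (τ - s)) * (τ - s)) s := by
    intro s
    have h1 : HasDerivAt (fun s : ℝ => -lam * (τ - s)) lam s := by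
      simpa using ((hasDerivAt_id s).const_sub τ).const_mul (-lam)
    have h2 : HasDerivAt (fun s : ℝ => Real.exp (-lam * (τ - s)))
        (Real.exp (-lam * (τ - s)) * lam) s := h1.exp
    have h3 : HasDerivAt (fun s : ℝ => (τ - s) / lam + 1 / lam ^ 2) (-1 / lam) s := by
      have := (((hasDerivAt_id s).const_sub τ).div_const lam).add_const (1 / lam ^ 2)
      simpa [div_eq_mul_inv] using this
    have := h2.mul h3
    refine HasDerivAt.congr_deriv this ?_
    have hlam' : lam ≠ 0 := hlam.ne'
    field_simp
    ring
  refine (intervalIntegral.integral_eq_sub_of_hasDerivAt (fun s _ => h s) ?_)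
  apply Continuous.intervalIntegrable
  continuity

lemma pos_case (τ τ₀ lam κ₁ : ℝ) (hτ₀ : 0 ≤ τ₀) (hτ₀τ : τ₀ < τ)
    (hlam : 0 < lam) (hκ₁ : 0 < κ₁) (ψ : ℝ → ℝ)
    (hψc : ContinuousOn ψ (Set.Icc 0 τ))
    (hpos : ∀ s ∈ Set.Icc (0:ℝ) τ, 0 ≤ ψ s)
    (hlow : ∀ s ∈ Set.Icc τ₀ τ, κ₁ ≤ ψ s) :
    κ₁ * (1 - (1 + lam * (τ - τ₀)) * Real.exp (-lam * (τ - τ₀))) / lam ^ 2 ≤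
      ∫ s in (0:ℝ)..τ, Real.exp (-lam * (τ - s)) * (τ - s) * ψ s := by
  have hτ : (0:ℝ) < τ := lt_of_le_of_lt hτ₀ hτ₀τ
  have hsub : Set.Icc τ₀ τ ⊆ Set.Icc 0 τ := Set.Icc_subset_Icc hτ₀ le_rfl
  have hcont : ContinuousOn (fun s => Real.exp (-lam * (τ - s)) * (τ - s) * ψ s)
      (Set.Icc 0 τ) := by
    apply ContinuousOn.mul _ hψc
    exact (Continuous.continuousOn (by continuity)).mul (Continuous.continuousOn (by continuity))
  have hInt1 : IntervalIntegrable (fun s => Real.exp (-lam * (τ - s)) * (τ - s) * ψ s)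
      MeasureTheory.volume 0 τ := by
    exact hcont.intervalIntegrable_of_Icc hτ.le
  have hInt2 : IntervalIntegrable (fun s => Real.exp (-lam * (τ - s)) * (τ - s) * ψ s)
      MeasureTheory.volume τ₀ τ := by
    exact (hcont.mono hsub).intervalIntegrable_of_Icc hτ₀τ.le
  have hInt0 : IntervalIntegrable (fun s => Real.exp (-lam * (τ - s)) * (τ - s) * ψ s)
      MeasureTheory.volume 0 τ₀ := by
    exact (hcont.mono (Set.Icc_subset_Icc le_rfl hτ₀τ.le)).intervalIntegrable_of_Icc hτ₀
  have hIntK : IntervalIntegrable (fun s => κ₁ * (Real.exp (-lam * (τ - s)) * (τ - s)))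
      MeasureTheory.volume τ₀ τ := by
    apply Continuous.intervalIntegrable; continuity
  have hsplit : (∫ s in (0:ℝ)..τ, Real.exp (-lam * (τ - s)) * (τ - s) * ψ s) =
      (∫ s in (0:ℝ)..τ₀, Real.exp (-lam * (τ - s)) * (τ - s) * ψ s) +
      (∫ s in τ₀..τ, Real.exp (-lam * (τ - s)) * (τ - s) * ψ s) :=
    (intervalIntegral.integral_add_adjacent_intervals hInt0 hInt2).symm
  have h1 : (0:ℝ) ≤ ∫ s in (0:ℝ)..τ₀, Real.exp (-lam * (τ - s)) * (τ - s) * ψ s := by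
    apply intervalIntegral.integral_nonneg hτ₀
    intro s hs
    have hs' : s ∈ Set.Icc (0:ℝ) τ := ⟨hs.1, hs.2.trans hτ₀τ.le⟩
    exact mul_nonneg (mul_nonneg (Real.exp_pos _).le (sub_nonneg.mpr hs'.2)) (hpos s hs')
  have h2 : (∫ s in τ₀..τ, κ₁ * (Real.exp (-lam * (τ - s)) * (τ - s))) ≤
      ∫ s in τ₀..τ, Real.exp (-lam * (τ - s)) * (τ - s) * ψ s := by
    apply intervalIntegral.integral_mono_on hτ₀τ.le hIntK hInt2
    intro s hs
    have hψ := hlow s hs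
    have hexp : 0 ≤ Real.exp (-lam * (τ - s)) := (Real.exp_pos _).le
    have hts : 0 ≤ τ - s := sub_nonneg.mpr hs.2
    calc κ₁ * (Real.exp (-lam * (τ - s)) * (τ - s))
        ≤ ψ s * (Real.exp (-lam * (τ - s)) * (τ - s)) := by
          apply mul_le_mul_of_nonneg_right hψ (by positivity)
      _ = Real.exp (-lam * (τ - s)) * (τ - s) * ψ s := by ring
  have h3 : (∫ s in τ₀..τ, κ₁ * (Real.exp (-lam * (τ - s)) * (τ - s))) =
      κ₁ * (1 - (1 + lam * (τ - τ₀)) * Real.exp (-lam * (τ - τ₀))) / lam ^ 2 := by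
    rw [intervalIntegral.integral_const_mul, weight_integral lam τ τ₀ τ hlam]
    have : (-lam * (τ - τ)) = 0 := by ring
    rw [this, Real.exp_zero]
    field_simp
    ring
  rw [hsplit]
  linarith [h1, h2, h3.symm.le.trans h2]

theorem stmt_5 (τ τ₀ lam κ₁ : ℝ) (hτ : 0 < τ) (hτ₀ : 0 ≤ τ₀) (hτ₀τ : τ₀ < τ)
    (hlam : 0 < lam) (hκ₁ : 0 < κ₁) (ψ : ℝ → ℝ)
    (hψc : ContinuousOn ψ (Set.Icc 0 τ))
    (hsign : (∀ s ∈ Set.Icc (0:ℝ) τ, 0 ≤ ψ s) ∨ (∀ s ∈ Set.Icc (0:ℝ) τ, ψ s ≤ 0))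
    (hlow : ∀ s ∈ Set.Icc τ₀ τ, κ₁ ≤ |ψ s|) :
    κ₁ * (1 - (1 + lam * (τ - τ₀)) * Real.exp (-lam * (τ - τ₀))) / lam ^ 2 ≤
      |∫ s in (0:ℝ)..τ, Real.exp (-lam * (τ - s)) * (τ - s) * ψ s| := by
  have hsub : Set.Icc τ₀ τ ⊆ Set.Icc 0 τ := Set.Icc_subset_Icc hτ₀ le_rfl
  rcases hsign with hpos | hneg
  · have hlow' : ∀ s ∈ Set.Icc τ₀ τ, κ₁ ≤ ψ s := by
      intro s hs
      have := hlow s hs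
      rwa [abs_of_nonneg (hpos s (hsub hs))] at this
    exact (pos_case τ τ₀ lam κ₁ hτ₀ hτ₀τ hlam hκ₁ ψ hψc hpos hlow').trans (le_abs_self _)
  · have hlow' : ∀ s ∈ Set.Icc τ₀ τ, κ₁ ≤ -ψ s := by
      intro s hs
      have := hlow s hs
      rwa [abs_of_nonpos (hneg s (hsub hs))] at this
    have h := pos_case τ τ₀ lam κ₁ hτ₀ hτ₀τ hlam hκ₁ (fun s => -ψ s) hψc.neg
      (fun s hs => neg_nonneg.mpr (hneg s hs)) hlow'
    have heq : (∫ s in (0:ℝ)..τ, Real.exp (-lam * (τ - s)) * (τ - s) * (-ψ s)) =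
        -∫ s in (0:ℝ)..τ, Real.exp (-lam * (τ - s)) * (τ - s) * ψ s := by
      rw [← intervalIntegral.integral_neg]
      congr 1; funext s; ring
    rw [heq] at h
    exact h.trans (neg_le_abs _)
end

section
/- Let τ > 0, 0 ≤ τ₀ < τ, κ₁ > 0, λ₁ > 0, and suppose ψ : [0,τ] → ℝ is continuous, of fixed sign on [0,τ], with |ψ| ≥ κ₁ on [τ₀, τ]. Then there exists C > 0 (namely C = κ₁·(1 - (1 + λ₁(τ-τ₀))·e^{-λ₁(τ-τ₀)})) such that for all λ ≥ λ₁, |∫₀^τ e^{-λ(τ-s)}·(τ-s)·ψ(s) ds| ≥ C/λ². -/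
open Set intervalIntegral

/-- antiderivative computation -/
lemma aux_deriv (τ lam : ℝ) (hlam : 0 < lam) (s : ℝ) :
    HasDerivAt (fun s => Real.exp (-lam*(τ-s)) * ((τ-s)/lam + 1/lam^2))
      (Real.exp (-lam*(τ-s)) * (τ-s)) s := by
  have h1 : HasDerivAt (fun s : ℝ => -lam*(τ-s)) lam s := by
    have := ((hasDerivAt_id s).const_sub τ).const_mul (-lam)
    simpa using this
  have hexp := h1.exp
  have h2 : HasDerivAt (fun s : ℝ => (τ-s)/lam + 1/lam^2) (-1/lam) s := by
    have := (((hasDerivAt_id s).const_sub τ).div_const lam).add_const (1/lam^2)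
    simpa using this
  have := hexp.mul h2
  convert this using 1
  · rfl
  · rfl
  · rfl
  have hl : lam ≠ 0 := ne_of_gt hlam
  field_simp
  ring

lemma aux_int (τ lam a b : ℝ) (hlam : 0 < lam) :
    ∫ s in a..b, Real.exp (-lam*(τ-s)) * (τ-s)
      = Real.exp (-lam*(τ-b)) * ((τ-b)/lam + 1/lam^2)
        - Real.exp (-lam*(τ-a)) * ((τ-a)/lam + 1/lam^2) := by
  apply intervalIntegral.integral_eq_sub_of_hasDerivAt
  · intro s _
    exact aux_deriv τ lam hlam s
  · apply ContinuousOn.intervalIntegrable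
    fun_prop

lemma aux_key (τ τ₀ κ₁ : ℝ) (hτ₀ : 0 ≤ τ₀) (hτ₀τ : τ₀ < τ)
    (hκ₁ : 0 < κ₁) (ψ : ℝ → ℝ) (hψc : ContinuousOn ψ (Set.Icc 0 τ))
    (hpos : ∀ s ∈ Set.Icc (0:ℝ) τ, 0 ≤ ψ s)
    (hlow : ∀ s ∈ Set.Icc τ₀ τ, κ₁ ≤ ψ s)
    (lam : ℝ) (hlam : 0 < lam) :
    κ₁ * (1 - (1 + lam * (τ - τ₀)) * Real.exp (-lam * (τ - τ₀))) / lam ^ 2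
      ≤ ∫ s in (0:ℝ)..τ, Real.exp (-lam*(τ-s)) * (τ-s) * ψ s := by
  have hτ : (0:ℝ) ≤ τ := le_of_lt (lt_of_le_of_lt hτ₀ hτ₀τ)
  have hint : IntervalIntegrable (fun s => Real.exp (-lam*(τ-s)) * (τ-s) * ψ s)
      MeasureTheory.volume 0 τ := by
    apply ContinuousOn.intervalIntegrable
    rw [Set.uIcc_of_le hτ]
    exact (Continuous.continuousOn (by fun_prop)).mul hψc
  have hsub1 : IntervalIntegrable (fun s => Real.exp (-lam*(τ-s)) * (τ-s) * ψ s)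
      MeasureTheory.volume 0 τ₀ :=
    hint.mono_set (by rw [Set.uIcc_of_le hτ₀, Set.uIcc_of_le hτ]
                      exact Set.Icc_subset_Icc le_rfl (le_of_lt hτ₀τ))
  have hsub2 : IntervalIntegrable (fun s => Real.exp (-lam*(τ-s)) * (τ-s) * ψ s)
      MeasureTheory.volume τ₀ τ :=
    hint.mono_set (by rw [Set.uIcc_of_le (le_of_lt hτ₀τ), Set.uIcc_of_le hτ]
                      exact Set.Icc_subset_Icc hτ₀ le_rfl)
  have hsplit : (∫ s in (0:ℝ)..τ, Real.exp (-lam*(τ-s)) * (τ-s) * ψ s)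
      = (∫ s in (0:ℝ)..τ₀, Real.exp (-lam*(τ-s)) * (τ-s) * ψ s)
        + ∫ s in τ₀..τ, Real.exp (-lam*(τ-s)) * (τ-s) * ψ s :=
    (intervalIntegral.integral_add_adjacent_intervals hsub1 hsub2).symm
  have h1 : 0 ≤ ∫ s in (0:ℝ)..τ₀, Real.exp (-lam*(τ-s)) * (τ-s) * ψ s := by
    apply intervalIntegral.integral_nonneg hτ₀
    intro s hs
    have hs' : s ∈ Set.Icc (0:ℝ) τ := ⟨hs.1, le_trans hs.2 (le_of_lt hτ₀τ)⟩
    have hψ := hpos s hs'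
    have : 0 ≤ τ - s := by linarith [hs.2, hτ₀τ]
    positivity
  have h2 : (∫ s in τ₀..τ, κ₁ * (Real.exp (-lam*(τ-s)) * (τ-s)))
      ≤ ∫ s in τ₀..τ, Real.exp (-lam*(τ-s)) * (τ-s) * ψ s := by
    apply intervalIntegral.integral_mono_on (le_of_lt hτ₀τ)
    · apply ContinuousOn.intervalIntegrable; fun_prop
    · exact hsub2
    · intro s hs
      have hτs : 0 ≤ τ - s := by linarith [hs.2]
      have hψ := hlow s hs
      have he : 0 < Real.exp (-lam*(τ-s)) := Real.exp_pos _
      nlinarith [mul_nonneg he.le hτs]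
  have h3 : (∫ s in τ₀..τ, κ₁ * (Real.exp (-lam*(τ-s)) * (τ-s)))
      = κ₁ * (1 - (1 + lam * (τ - τ₀)) * Real.exp (-lam * (τ - τ₀))) / lam ^ 2 := by
    rw [intervalIntegral.integral_const_mul, aux_int τ lam τ₀ τ hlam]
    have hl : lam ≠ 0 := ne_of_gt hlam
    simp only [sub_self, mul_zero, neg_zero, Real.exp_zero]
    field_simp
    ring
  rw [hsplit, ← h3]
  linarith [h1, h2]

/-- monotonicity of (1+x)e^{-x} -/
lemma aux_mono {x y : ℝ} (hx : 0 ≤ x) (hxy : x ≤ y) :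
    (1 + y) * Real.exp (-y) ≤ (1 + x) * Real.exp (-x) := by
  have hder : ∀ t : ℝ, HasDerivAt (fun x : ℝ => (1 + x) * Real.exp (-x))
      (1 * Real.exp (-t) + (1 + t) * (Real.exp (-t) * (-1))) t := fun t =>
    (((hasDerivAt_id t).const_add 1)).mul (((hasDerivAt_id t).neg).exp)
  have h : AntitoneOn (fun x : ℝ => (1 + x) * Real.exp (-x)) (Set.Ici 0) := by
    apply antitoneOn_of_deriv_nonpos (convex_Ici 0)
    · fun_prop
    · intro t _
      exact (hder t).differentiableAt.differentiableWithinAt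
    · intro t ht
      rw [(hder t).deriv]
      have ht' : 0 < t := by simpa using ht
      have := Real.exp_pos (-t)
      nlinarith
  exact h (Set.mem_Ici.2 hx) (Set.mem_Ici.2 (le_trans hx hxy)) hxy

theorem stmt_6 (τ τ₀ κ₁ lam1 : ℝ) (hτ : 0 < τ) (hτ₀ : 0 ≤ τ₀) (hτ₀τ : τ₀ < τ)
    (hκ₁ : 0 < κ₁) (hlam1 : 0 < lam1) (ψ : ℝ → ℝ)
    (hψc : ContinuousOn ψ (Set.Icc 0 τ))
    (hsign : (∀ s ∈ Set.Icc (0:ℝ) τ, 0 ≤ ψ s) ∨ (∀ s ∈ Set.Icc (0:ℝ) τ, ψ s ≤ 0))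
    (hlow : ∀ s ∈ Set.Icc τ₀ τ, κ₁ ≤ |ψ s|) :
    ∃ C : ℝ, 0 < C ∧
      C = κ₁ * (1 - (1 + lam1 * (τ - τ₀)) * Real.exp (-lam1 * (τ - τ₀))) ∧
      ∀ lam : ℝ, lam1 ≤ lam →
        C / lam ^ 2 ≤ |∫ s in (0:ℝ)..τ, Real.exp (-lam * (τ - s)) * (τ - s) * ψ s| := by
  set δ := τ - τ₀ with hδ
  have hδpos : 0 < δ := by simp [hδ]; linarith
  refine ⟨κ₁ * (1 - (1 + lam1 * δ) * Real.exp (-lam1 * δ)), ?_, rfl, ?_⟩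
  · have hx : 0 < lam1 * δ := mul_pos hlam1 hδpos
    have h := Real.add_one_lt_exp (ne_of_gt hx)
    have he : 0 < Real.exp (-(lam1 * δ)) := Real.exp_pos _
    have hmul : (1 + lam1 * δ) * Real.exp (-(lam1 * δ)) < 1 := by
      rw [Real.exp_neg]
      rw [mul_inv_lt_iff₀ (Real.exp_pos _)]
      linarith
    have : -lam1 * δ = -(lam1 * δ) := by ring
    rw [this]
    nlinarith
  · intro lam hlam
    have hlampos : 0 < lam := lt_of_lt_of_le hlam1 hlam
    have hmono : κ₁ * (1 - (1 + lam1 * δ) * Real.exp (-lam1 * δ)) / lam ^ 2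
        ≤ κ₁ * (1 - (1 + lam * δ) * Real.exp (-lam * δ)) / lam ^ 2 := by
      have h := aux_mono (mul_nonneg hlam1.le hδpos.le)
        (mul_le_mul_of_nonneg_right hlam hδpos.le)
      have h1 : -lam1 * δ = -(lam1 * δ) := by ring
      have h2 : -lam * δ = -(lam * δ) := by ring
      rw [h1, h2]
      gcongr
    refine le_trans hmono ?_
    rcases hsign with hpos | hneg
    · have hlow' : ∀ s ∈ Set.Icc τ₀ τ, κ₁ ≤ ψ s := by
        intro s hs
        have := hlow s hs
        have h0 : 0 ≤ ψ s := hpos s ⟨le_trans hτ₀ hs.1, hs.2⟩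
        rwa [abs_of_nonneg h0] at this
      have := aux_key τ τ₀ κ₁ hτ₀ hτ₀τ hκ₁ ψ hψc hpos hlow' lam hlampos
      exact le_trans this (le_abs_self _)
    · have hlow' : ∀ s ∈ Set.Icc τ₀ τ, κ₁ ≤ -ψ s := by
        intro s hs
        have := hlow s hs
        have h0 : ψ s ≤ 0 := hneg s ⟨le_trans hτ₀ hs.1, hs.2⟩
        rwa [abs_of_nonpos h0] at this
      have hpos' : ∀ s ∈ Set.Icc (0:ℝ) τ, 0 ≤ -ψ s := fun s hs => neg_nonneg.2 (hneg s hs)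
      have hkey := aux_key τ τ₀ κ₁ hτ₀ hτ₀τ hκ₁ (fun s => -ψ s) hψc.neg hpos' hlow' lam hlampos
      have heq : (∫ s in (0:ℝ)..τ, Real.exp (-lam*(τ-s)) * (τ-s) * (-ψ s))
          = -(∫ s in (0:ℝ)..τ, Real.exp (-lam*(τ-s)) * (τ-s) * ψ s) := by
        rw [← intervalIntegral.integral_neg]
        congr 1; funext s; ring
      rw [heq] at hkey
      exact le_trans hkey ((neg_le_abs _))
end

section
/- Let τ > 0 and ψ : [0,τ] → ℝ be continuously differentiable with |ψ'| ≤ κ₂ on [0,τ] and ψ(τ) ≠ 0. Let C̃ > (|ψ(0)| + 2τκ₂)/(τ·|ψ(τ)|). Then for every λ ≥ C̃, λ²·|∫₀^τ e^{-λ(τ-s)}(τ-s)ψ(s) ds| ≥ |ψ(τ)| - (|ψ(0)| + 2τκ₂)/(τ·C̃) > 0. -/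
private lemma keyexp (x : ℝ) (hx : 0 ≤ x) : x * (1 + x) ≤ Real.exp x := by
  have h := Real.sum_le_exp_of_nonneg hx 4
  norm_num [Finset.sum_range_succ, Nat.factorial] at h
  nlinarith [sq_nonneg (x - 2), mul_nonneg hx (sq_nonneg (x - 2))]

private lemma intA (τ lam : ℝ) (hlam : 0 < lam) :
    (∫ s in (0:ℝ)..τ, Real.exp (-lam * (τ - s)) * (τ - s))
      = 1 / lam ^ 2 - Real.exp (-(lam * τ)) * (τ / lam + 1 / lam ^ 2) := by
  have hlam' : lam ≠ 0 := hlam.ne'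
  have hF : ∀ s : ℝ, HasDerivAt (fun s => Real.exp (-lam * (τ - s)) * ((τ - s) / lam + 1 / lam ^ 2))
      (Real.exp (-lam * (τ - s)) * (τ - s)) s := by
    intro s
    have h1 : HasDerivAt (fun s : ℝ => -lam * (τ - s)) lam s := by
      simpa using ((hasDerivAt_id s).const_sub τ).const_mul (-lam)
    have h2 : HasDerivAt (fun s : ℝ => (τ - s) / lam + 1 / lam ^ 2) (-1 / lam) s := by
      have := (((hasDerivAt_id s).const_sub τ).div_const lam).add_const (1 / lam ^ 2)
      exact this
    have := (h1.exp.mul h2)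
    refine this.congr_deriv ?_
    field_simp
    ring
  have := intervalIntegral.integral_eq_sub_of_hasDerivAt
    (a := (0:ℝ)) (b := τ)
    (f := fun s => Real.exp (-lam * (τ - s)) * ((τ - s) / lam + 1 / lam ^ 2))
    (fun s _ => hF s)
    (by apply Continuous.intervalIntegrable; continuity)
  rw [this]
  simp

private lemma intB (τ lam : ℝ) (hlam : 0 < lam) :
    (∫ s in (0:ℝ)..τ, Real.exp (-lam * (τ - s)) * (τ - s) ^ 2)
      = 2 / lam ^ 3 - Real.exp (-(lam * τ)) * (τ ^ 2 / lam + 2 * τ / lam ^ 2 + 2 / lam ^ 3) := by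
  have hlam' : lam ≠ 0 := hlam.ne'
  have hF : ∀ s : ℝ, HasDerivAt
      (fun s => Real.exp (-lam * (τ - s)) * ((τ - s) ^ 2 / lam + 2 * (τ - s) / lam ^ 2 + 2 / lam ^ 3))
      (Real.exp (-lam * (τ - s)) * (τ - s) ^ 2) s := by
    intro s
    have h1 : HasDerivAt (fun s : ℝ => -lam * (τ - s)) lam s := by
      simpa using ((hasDerivAt_id s).const_sub τ).const_mul (-lam)
    have hτs : HasDerivAt (fun s : ℝ => τ - s) (-1) s := by
      simpa using (hasDerivAt_id s).const_sub τ
    have h2 : HasDerivAt (fun s : ℝ => (τ - s) ^ 2 / lam + 2 * (τ - s) / lam ^ 2 + 2 / lam ^ 3)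
        (-(2 * (τ - s)) / lam + -2 / lam ^ 2) s := by
      have ha := (hτs.pow 2).div_const lam
      have hb := ((hτs.const_mul 2).div_const (lam ^ 2))
      have := ((ha.add hb).add_const (2 / lam ^ 3))
      refine this.congr_deriv ?_
      field_simp
      norm_num
      ring
    have := (h1.exp.mul h2)
    refine this.congr_deriv ?_
    field_simp
    ring
  have := intervalIntegral.integral_eq_sub_of_hasDerivAt
    (a := (0:ℝ)) (b := τ)
    (f := fun s => Real.exp (-lam * (τ - s)) * ((τ - s) ^ 2 / lam + 2 * (τ - s) / lam ^ 2 + 2 / lam ^ 3))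
    (fun s _ => hF s)
    (by apply Continuous.intervalIntegrable; continuity)
  rw [this]
  simp

set_option maxHeartbeats 1000000 in
theorem stmt_8 (τ κ₂ Ctil : ℝ) (hτ : 0 < τ) (hκ₂ : 0 < κ₂) (ψ ψ' : ℝ → ℝ)
    (hderiv : ∀ s ∈ Set.Icc (0:ℝ) τ, HasDerivAt ψ (ψ' s) s)
    (hcont : ContinuousOn ψ' (Set.Icc 0 τ))
    (hbound : ∀ s ∈ Set.Icc (0:ℝ) τ, |ψ' s| ≤ κ₂)
    (hψτ : ψ τ ≠ 0)
    (hC : (|ψ 0| + 2 * τ * κ₂) / (τ * |ψ τ|) < Ctil) :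
    ∀ lam : ℝ, Ctil ≤ lam →
      |ψ τ| - (|ψ 0| + 2 * τ * κ₂) / (τ * Ctil) ≤
        lam ^ 2 * |∫ s in (0:ℝ)..τ, Real.exp (-lam * (τ - s)) * (τ - s) * ψ s| ∧
      0 < |ψ τ| - (|ψ 0| + 2 * τ * κ₂) / (τ * Ctil) := by
  intro lam hlam
  have hψτpos : 0 < |ψ τ| := abs_pos.2 hψτ
  have hnum : 0 < |ψ 0| + 2 * τ * κ₂ := by positivity
  have hden : 0 < τ * |ψ τ| := by positivity
  have hC0 : 0 < Ctil := lt_trans (div_pos hnum hden) hC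
  have hlam0 : 0 < lam := lt_of_lt_of_le hC0 hlam
  have hlam' : lam ≠ 0 := hlam0.ne'
  -- positivity of the lower bound
  have hpos : 0 < |ψ τ| - (|ψ 0| + 2 * τ * κ₂) / (τ * Ctil) := by
    rw [div_lt_iff₀ hden] at hC
    rw [sub_pos, div_lt_iff₀ (by positivity)]
    nlinarith
  refine ⟨?_, hpos⟩
  -- MVT bound
  have hlip : ∀ s ∈ Set.Icc (0:ℝ) τ, |ψ s - ψ τ| ≤ κ₂ * (τ - s) := by
    intro s hs
    have h := (convex_Icc (0:ℝ) τ).norm_image_sub_le_of_norm_hasDerivWithin_le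
      (fun x hx => (hderiv x hx).hasDerivWithinAt) (fun x hx => hbound x hx)
      hs (Set.right_mem_Icc.2 hτ.le)
    rw [Real.norm_eq_abs, Real.norm_eq_abs, abs_of_nonneg (by linarith [hs.2] : (0:ℝ) ≤ τ - s)] at h
    rwa [abs_sub_comm]
  have hψ0 : |ψ τ| ≤ |ψ 0| + κ₂ * τ := by
    have h := hlip 0 (Set.left_mem_Icc.2 hτ.le)
    have := abs_sub_abs_le_abs_sub (ψ 0) (ψ τ)
    have h2 := abs_sub_abs_le_abs_sub (ψ τ) (ψ 0)
    rw [abs_sub_comm] at h2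
    simp only [sub_zero] at h
    linarith
  -- fun_prop
  have hψc : ContinuousOn ψ (Set.Icc 0 τ) := fun s hs =>
    (hderiv s hs).continuousAt.continuousWithinAt
  have huIcc : Set.uIcc (0:ℝ) τ = Set.Icc 0 τ := Set.uIcc_of_le hτ.le
  have hec : Continuous fun s : ℝ => Real.exp (-lam * (τ - s)) * (τ - s) := by fun_prop
  have hint1 : IntervalIntegrable (fun s => Real.exp (-lam * (τ - s)) * (τ - s) * ψ s)
      MeasureTheory.volume 0 τ := by
    apply ContinuousOn.intervalIntegrable
    rw [huIcc]
    exact (hec.continuousOn).mul hψc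
  have hint2 : IntervalIntegrable (fun s => Real.exp (-lam * (τ - s)) * (τ - s) * (ψ s - ψ τ))
      MeasureTheory.volume 0 τ := by
    apply ContinuousOn.intervalIntegrable
    rw [huIcc]
    exact (hec.continuousOn).mul (hψc.sub continuousOn_const)
  have hint3 : IntervalIntegrable (fun s => ψ τ * (Real.exp (-lam * (τ - s)) * (τ - s)))
      MeasureTheory.volume 0 τ := by
    apply Continuous.intervalIntegrable
    exact continuous_const.mul hec
  -- decomposition
  have hsplit : (∫ s in (0:ℝ)..τ, Real.exp (-lam * (τ - s)) * (τ - s) * ψ s)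
      = ψ τ * (∫ s in (0:ℝ)..τ, Real.exp (-lam * (τ - s)) * (τ - s))
        + ∫ s in (0:ℝ)..τ, Real.exp (-lam * (τ - s)) * (τ - s) * (ψ s - ψ τ) := by
    rw [← intervalIntegral.integral_const_mul, ← intervalIntegral.integral_add hint3 hint2]
    apply intervalIntegral.integral_congr
    intro s _
    ring
  -- bound on remainder
  have hrem : |∫ s in (0:ℝ)..τ, Real.exp (-lam * (τ - s)) * (τ - s) * (ψ s - ψ τ)|
      ≤ κ₂ * ∫ s in (0:ℝ)..τ, Real.exp (-lam * (τ - s)) * (τ - s) ^ 2 := by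
    rw [← intervalIntegral.integral_const_mul]
    have habs : |∫ s in (0:ℝ)..τ, Real.exp (-lam * (τ - s)) * (τ - s) * (ψ s - ψ τ)|
        ≤ ∫ s in (0:ℝ)..τ, |Real.exp (-lam * (τ - s)) * (τ - s) * (ψ s - ψ τ)| := by
      exact intervalIntegral.abs_integral_le_integral_abs hτ.le
    refine habs.trans ?_
    apply intervalIntegral.integral_mono_on hτ.le (hint2.abs) ?_ ?_
    · apply ContinuousOn.intervalIntegrable
      rw [huIcc]
      apply ContinuousOn.mul continuousOn_const
      exact Continuous.continuousOn (by fun_prop)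
    · intro s hs
      have h1 : (0:ℝ) ≤ τ - s := by linarith [hs.2]
      have h2 := hlip s hs
      rw [abs_mul, abs_mul, abs_of_nonneg (Real.exp_pos _).le, abs_of_nonneg h1]
      calc Real.exp (-lam * (τ - s)) * (τ - s) * |ψ s - ψ τ|
          ≤ Real.exp (-lam * (τ - s)) * (τ - s) * (κ₂ * (τ - s)) := by
            apply mul_le_mul_of_nonneg_left h2 (by positivity)
        _ = κ₂ * (Real.exp (-lam * (τ - s)) * (τ - s) ^ 2) := by ring
  -- exact values
  have hA := intA τ lam hlam0
  have hB := intB τ lam hlam0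
  set E := Real.exp (-(lam * τ)) with hE
  have hE0 : 0 < E := Real.exp_pos _
  have hkey : E * (lam * τ * (1 + lam * τ)) ≤ 1 := by
    have h := keyexp (lam * τ) (by positivity)
    rw [hE, Real.exp_neg]
    rw [inv_mul_le_iff₀ (Real.exp_pos _), mul_one]
    linarith
  -- put it together
  set P := |ψ τ| with hP
  set Q := |ψ 0| with hQ
  have hQ0 : 0 ≤ Q := abs_nonneg _
  have hmain : P - (Q + 2 * τ * κ₂) / (τ * lam)
      ≤ lam ^ 2 * |∫ s in (0:ℝ)..τ, Real.exp (-lam * (τ - s)) * (τ - s) * ψ s| := by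
    have htri : P * (1 / lam ^ 2 - E * (τ / lam + 1 / lam ^ 2))
        - κ₂ * (2 / lam ^ 3 - E * (τ ^ 2 / lam + 2 * τ / lam ^ 2 + 2 / lam ^ 3))
        ≤ |∫ s in (0:ℝ)..τ, Real.exp (-lam * (τ - s)) * (τ - s) * ψ s| := by
      rw [hsplit]
      have h1 : |ψ τ * (∫ s in (0:ℝ)..τ, Real.exp (-lam * (τ - s)) * (τ - s))|
          = P * (1 / lam ^ 2 - E * (τ / lam + 1 / lam ^ 2)) := by
        rw [abs_mul, hA]
        congr 1
        rw [abs_of_nonneg]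
        have h2 : E * (lam * τ + 1) ≤ 1 := by
          have := Real.add_one_le_exp (lam * τ)
          rw [hE, Real.exp_neg, inv_mul_le_iff₀ (Real.exp_pos _), mul_one]
          linarith
        have : 1 / lam ^ 2 - E * (τ / lam + 1 / lam ^ 2)
            = (1 - E * (lam * τ + 1)) / lam ^ 2 := by field_simp
        rw [this]
        apply div_nonneg (by linarith) (by positivity)
      calc P * (1 / lam ^ 2 - E * (τ / lam + 1 / lam ^ 2))
            - κ₂ * (2 / lam ^ 3 - E * (τ ^ 2 / lam + 2 * τ / lam ^ 2 + 2 / lam ^ 3))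
          ≤ |ψ τ * (∫ s in (0:ℝ)..τ, Real.exp (-lam * (τ - s)) * (τ - s))|
            - |∫ s in (0:ℝ)..τ, Real.exp (-lam * (τ - s)) * (τ - s) * (ψ s - ψ τ)| := by
            rw [h1, ← hB]
            linarith [hrem]
        _ ≤ |ψ τ * (∫ s in (0:ℝ)..τ, Real.exp (-lam * (τ - s)) * (τ - s))
            + ∫ s in (0:ℝ)..τ, Real.exp (-lam * (τ - s)) * (τ - s) * (ψ s - ψ τ)| := by
            have := abs_add_le (ψ τ * (∫ s in (0:ℝ)..τ, Real.exp (-lam * (τ - s)) * (τ - s))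
              + ∫ s in (0:ℝ)..τ, Real.exp (-lam * (τ - s)) * (τ - s) * (ψ s - ψ τ))
              (-(∫ s in (0:ℝ)..τ, Real.exp (-lam * (τ - s)) * (τ - s) * (ψ s - ψ τ)))
            simp only [add_neg_cancel_right, abs_neg] at this
            linarith
    -- now the arithmetic
    have hstep : P - (Q + 2 * τ * κ₂) / (τ * lam)
        ≤ lam ^ 2 * (P * (1 / lam ^ 2 - E * (τ / lam + 1 / lam ^ 2))
          - κ₂ * (2 / lam ^ 3 - E * (τ ^ 2 / lam + 2 * τ / lam ^ 2 + 2 / lam ^ 3))) := by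
      have hid : lam ^ 2 * (P * (1 / lam ^ 2 - E * (τ / lam + 1 / lam ^ 2))
          - κ₂ * (2 / lam ^ 3 - E * (τ ^ 2 / lam + 2 * τ / lam ^ 2 + 2 / lam ^ 3)))
          = P - P * (E * (1 + lam * τ)) - 2 * κ₂ / lam
            + κ₂ * (E * (lam * τ ^ 2 + 2 * τ + 2 / lam)) := by
        field_simp
        ring
      have hid2 : (Q + 2 * τ * κ₂) / (τ * lam) = Q / (τ * lam) + 2 * κ₂ / lam := by
        field_simp
      rw [hid, hid2]
      have key1 : Q * (E * (1 + lam * τ)) ≤ Q / (τ * lam) := by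
        rw [le_div_iff₀ (by positivity)]
        have := mul_le_mul_of_nonneg_left hkey hQ0
        nlinarith
      have key2 : (κ₂ * τ) * (E * (1 + lam * τ)) ≤ κ₂ * (E * (lam * τ ^ 2 + 2 * τ + 2 / lam)) := by
        have hgap : κ₂ * (E * (lam * τ ^ 2 + 2 * τ + 2 / lam)) - (κ₂ * τ) * (E * (1 + lam * τ))
            = κ₂ * E * (τ + 2 / lam) := by ring
        nlinarith [mul_pos (mul_pos hκ₂ hE0) (by positivity : (0:ℝ) < τ + 2 / lam)]
      have key3 : P * (E * (1 + lam * τ)) ≤ (Q + κ₂ * τ) * (E * (1 + lam * τ)) := by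
        apply mul_le_mul_of_nonneg_right hψ0
        have h3 : (0:ℝ) < 1 + lam * τ := by positivity
        positivity
      nlinarith
    refine hstep.trans ?_
    have h4 : 0 ≤ lam ^ 2 := sq_nonneg lam
    exact mul_le_mul_of_nonneg_left htri h4
  refine le_trans ?_ hmain
  have hdiv : (Q + 2 * τ * κ₂) / (τ * lam) ≤ (Q + 2 * τ * κ₂) / (τ * Ctil) := by
    apply div_le_div_of_nonneg_left (by positivity) (by positivity)
    nlinarith
  linarith
end

section
/- Let (λ_n) be a nondecreasing sequence of positive reals, (φ_n) an orthonormal basis of a Hilbert space H, and μ_n a sequence of nonzero reals with |μ_n| ≥ C/λ_n² for a constant C > 0. Suppose f ∈ H satisfies Σ_n λ_n^{2p}·|⟨f, φ_n⟩|² ≤ ϱ² for some p, ϱ > 0, and define h ∈ H by ⟨h, φ_n⟩ = μ_n·⟨f, φ_n⟩. Then ‖f‖ ≤ C^{-p/(p+2)}·ϱ^{2/(p+2)}·‖h‖^{p/(p+2)}. -/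
open scoped RealInnerProductSpace

theorem stmt_9 {H : Type*} [NormedAddCommGroup H] [InnerProductSpace ℝ H]
    (φ : HilbertBasis ℕ ℝ H) (lam μ : ℕ → ℝ) (C p ϱ : ℝ)
    (hC : 0 < C) (hp : 0 < p) (hϱ : 0 < ϱ)
    (hlampos : ∀ n, 0 < lam n) (hlammono : Monotone lam)
    (hμ : ∀ n, μ n ≠ 0) (hμlow : ∀ n, C / (lam n) ^ 2 ≤ |μ n|)
    (f h : H)
    (hsum : Summable (fun n => (lam n) ^ (2 * p) * |⟪f, φ n⟫|^2))
    (hsrc : ∑' n, (lam n) ^ (2 * p) * |⟪f, φ n⟫|^2 ≤ ϱ ^ 2)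
    (hh : ∀ n, ⟪h, φ n⟫ = μ n * ⟪f, φ n⟫) :
    ‖f‖ ≤ C ^ (-(p / (p + 2))) * ϱ ^ (2 / (p + 2)) * ‖h‖ ^ (p / (p + 2)) := by
  set a : ℕ → ℝ := fun n => ⟪f, φ n⟫ with ha
  set P : ℝ := (p + 2) / 2 with hP
  set Q : ℝ := (p + 2) / p with hQ
  have hp2 : (0:ℝ) < p + 2 := by linarith
  have hPpos : 0 < P := by positivity
  have hQpos : 0 < Q := by positivity
  have hpq : P.HolderConjugate Q := by
    rw [Real.holderConjugate_iff]; constructor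
    · rw [hP]; rw [lt_div_iff₀ (by norm_num : (0:ℝ) < 2)]; linarith
    · rw [hP, hQ]; field_simp; ring
  -- Parseval for f
  have hparsf : ∑' n, a n ^ 2 = ‖f‖ ^ 2 := by
    have := φ.tsum_inner_mul_inner f f
    rw [real_inner_self_eq_norm_sq] at this
    rw [← this]
    congr 1; ext n; rw [sq, ha]; simp [real_inner_comm]
  have hsumf : Summable fun n => a n ^ 2 := by
    have := φ.summable_inner_mul_inner f f
    refine this.congr fun n => ?_
    simp [ha, real_inner_comm, sq]
  -- Parseval for h
  have hparsh : ∑' n, (μ n * a n) ^ 2 = ‖h‖ ^ 2 := by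
    have := φ.tsum_inner_mul_inner h h
    rw [real_inner_self_eq_norm_sq] at this
    rw [← this]
    congr 1; ext n
    have h1 : ⟪(φ n : H), h⟫ = ⟪h, φ n⟫ := real_inner_comm _ _
    rw [h1, hh n, ha]; ring
  have hsumh : Summable fun n => (μ n * a n) ^ 2 := by
    have := φ.summable_inner_mul_inner h h
    refine this.congr fun n => ?_
    have h1 : ⟪(φ n : H), h⟫ = ⟪h, φ n⟫ := real_inner_comm _ _
    rw [h1, hh n, ha]; ring
  -- Hölder setup
  set F : ℕ → ℝ := fun n => ((lam n) ^ (2 * p) * a n ^ 2) ^ (1 / P) with hF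
  set G : ℕ → ℝ := fun n => (a n ^ 2 / (lam n) ^ 4) ^ (1 / Q) with hG
  have hFnn : ∀ n, 0 ≤ F n := fun n => Real.rpow_nonneg (mul_nonneg (Real.rpow_nonneg (hlampos n).le _) (sq_nonneg _)) _
  have hGnn : ∀ n, 0 ≤ G n := fun n => Real.rpow_nonneg (by positivity) _
  have hFP : ∀ n, F n ^ P = (lam n) ^ (2 * p) * a n ^ 2 := by
    intro n
    rw [hF]
    rw [one_div, Real.rpow_inv_rpow (mul_nonneg (Real.rpow_nonneg (hlampos n).le _) (sq_nonneg _)) hpq.pos.ne']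
  have hGQ : ∀ n, G n ^ Q = a n ^ 2 / (lam n) ^ 4 := by
    intro n
    rw [hG, one_div, Real.rpow_inv_rpow (by positivity) hpq.symm.pos.ne']
  have hFG : ∀ n, F n * G n = a n ^ 2 := by
    intro n
    have hx : (0:ℝ) < lam n := hlampos n
    show ((lam n ^ (2*p) * a n ^ 2) ^ (1 / P)) * ((a n ^ 2 / lam n ^ 4) ^ (1 / Q)) = a n ^ 2
    rcases eq_or_ne (a n) 0 with h0 | h0
    · rw [h0]
      simp [Real.zero_rpow (one_div_ne_zero hpq.pos.ne'),
        Real.zero_rpow (one_div_ne_zero hpq.symm.pos.ne'),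
        Real.zero_rpow (inv_ne_zero hpq.pos.ne'),
        Real.zero_rpow (inv_ne_zero hpq.symm.pos.ne')]
    · have ht' : 0 < a n ^ 2 := by rw [← sq_abs]; exact pow_pos (abs_pos.mpr h0) 2
      rw [Real.mul_rpow (Real.rpow_nonneg hx.le _) ht'.le,
        Real.div_rpow ht'.le (by positivity),
        ← Real.rpow_natCast (lam n) 4, ← Real.rpow_mul hx.le, ← Real.rpow_mul hx.le]
      have hD : (0:ℝ) < lam n ^ (((4:ℕ):ℝ) * (1 / Q)) := Real.rpow_pos_of_pos hx _
      rw [← mul_div_assoc, div_eq_iff hD.ne']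
      have he : 2 * p * (1 / P) = ((4:ℕ):ℝ) * (1 / Q) := by
        rw [hP, hQ]; push_cast; field_simp; ring
      have he2 : (1 / P + 1 / Q : ℝ) = 1 := by
        rw [one_div, one_div, hpq.inv_add_inv_eq_one]
      rw [mul_assoc, ← Real.rpow_add ht', he2, Real.rpow_one, he, mul_comm]
  -- summability of F^P and G^Q
  have hsumFP : Summable fun n => F n ^ P := by
    refine hsum.congr fun n => ?_
    rw [hFP n, sq_abs]
  have hGQle : ∀ n, G n ^ Q ≤ (μ n * a n) ^ 2 / C ^ 2 := by
    intro n
    rw [hGQ n]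
    have hx : (0:ℝ) < lam n := hlampos n
    have h2 : C ≤ |μ n| * lam n ^ 2 := (div_le_iff₀ (by positivity)).mp (hμlow n)
    have key2 : a n ^ 2 * C ^ 2 ≤ (μ n * a n) ^ 2 * lam n ^ 4 := by
      have h3 : (C * |a n|) ^ 2 ≤ (|μ n| * lam n ^ 2 * |a n|) ^ 2 :=
        pow_le_pow_left₀ (by positivity) (mul_le_mul_of_nonneg_right h2 (abs_nonneg _)) 2
      have h4 : C ^ 2 * a n ^ 2 ≤ μ n ^ 2 * lam n ^ 4 * a n ^ 2 := by
        calc C ^ 2 * a n ^ 2 = (C * |a n|) ^ 2 := by rw [mul_pow, sq_abs]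
          _ ≤ (|μ n| * lam n ^ 2 * |a n|) ^ 2 := h3
          _ = μ n ^ 2 * lam n ^ 4 * a n ^ 2 := by
              rw [mul_pow, mul_pow, sq_abs, sq_abs]; ring
      nlinarith [h4]
    rw [div_le_div_iff₀ (by positivity) (by positivity)]
    linarith
  have hsumGQ : Summable fun n => G n ^ Q := by
    refine Summable.of_nonneg_of_le (fun n => Real.rpow_nonneg (hGnn n) _) hGQle ?_
    exact (hsumh.div_const _)
  -- Hölder
  have holder := Real.inner_le_Lp_mul_Lq_tsum_of_nonneg hpq hFnn hGnn hsumFP hsumGQ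
  have hfsq : ‖f‖ ^ 2 ≤ (∑' n, F n ^ P) ^ (1 / P) * (∑' n, G n ^ Q) ^ (1 / Q) := by
    rw [← hparsf]
    calc ∑' n, a n ^ 2 = ∑' n, F n * G n := by exact tsum_congr fun n => (hFG n).symm
      _ ≤ _ := holder
  -- bound the two factors
  have hA : (∑' n, F n ^ P) ≤ ϱ ^ 2 := by
    refine le_trans (le_of_eq (tsum_congr fun n => ?_)) hsrc
    rw [hFP n, sq_abs]
  have hB : (∑' n, G n ^ Q) ≤ ‖h‖ ^ 2 / C ^ 2 := by
    calc (∑' n, G n ^ Q) ≤ ∑' n, (μ n * a n) ^ 2 / C ^ 2 :=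
          Summable.tsum_le_tsum hGQle hsumGQ (hsumh.div_const _)
      _ = ‖h‖ ^ 2 / C ^ 2 := by rw [tsum_div_const, hparsh]
  have hAnn : 0 ≤ ∑' n, F n ^ P := tsum_nonneg fun n => by
    rw [hFP n]; exact mul_nonneg (Real.rpow_nonneg (hlampos n).le _) (sq_nonneg _)
  have hBnn : 0 ≤ ∑' n, G n ^ Q := tsum_nonneg fun n => by rw [hGQ n]; positivity
  have hfsq2 : ‖f‖ ^ 2 ≤ (ϱ ^ 2) ^ (1 / P) * (‖h‖ ^ 2 / C ^ 2) ^ (1 / Q) := by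
    refine le_trans hfsq (mul_le_mul ?_ ?_ (Real.rpow_nonneg hBnn _) (Real.rpow_nonneg (by positivity) _))
    · exact Real.rpow_le_rpow hAnn hA (by positivity)
    · exact Real.rpow_le_rpow hBnn hB (by positivity)
  -- take square roots
  have hfin : ‖f‖ ≤ ((ϱ ^ 2) ^ (1 / P) * (‖h‖ ^ 2 / C ^ 2) ^ (1 / Q)) ^ ((1:ℝ) / 2) := by
    have := Real.rpow_le_rpow (by positivity) hfsq2 (by norm_num : (0:ℝ) ≤ 1/2)
    calc ‖f‖ = (‖f‖ ^ 2) ^ ((1:ℝ)/2) := by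
          rw [← Real.rpow_natCast ‖f‖ 2, ← Real.rpow_mul (norm_nonneg f)]
          norm_num
      _ ≤ _ := this
  refine le_trans hfin (le_of_eq ?_)
  rw [← Real.rpow_natCast ϱ 2, ← Real.rpow_natCast ‖h‖ 2, ← Real.rpow_natCast C 2]
  rw [Real.div_rpow (by positivity) (by positivity : (0:ℝ) ≤ C ^ ((2:ℕ):ℝ))]
  rw [Real.mul_rpow (by positivity) (by positivity)]
  rw [Real.div_rpow (by positivity) (by positivity : (0:ℝ) ≤ (C ^ ((2:ℕ):ℝ)) ^ (1 / Q))]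
  rw [← Real.rpow_mul hϱ.le, ← Real.rpow_mul hϱ.le,
    ← Real.rpow_mul (norm_nonneg h), ← Real.rpow_mul (norm_nonneg h),
    ← Real.rpow_mul hC.le, ← Real.rpow_mul hC.le]
  have e1 : (((2:ℕ):ℝ) * (1 / P) * (1 / 2)) = 2 / (p + 2) := by
    rw [hP]; push_cast; field_simp
  have e2 : (((2:ℕ):ℝ) * (1 / Q) * (1 / 2)) = p / (p + 2) := by
    rw [hQ]; push_cast; field_simp
  rw [e1, e2, Real.rpow_neg hC.le]
  ring
end

section
/- Let H be a Hilbert space with orthonormal basis (φ_n), λ_n > 0 with λ_n → ∞, b ≥ 2, α > 0, and μ_n nonzero reals with |μ_n| ≥ C/λ_n² for some C > 0. Define T_α on its natural domain by T_α φ = Σ_n (1 + α·λ_n^b)·μ_n·⟨φ, φ_n⟩·φ_n. Then for all φ in the domain of T_α, ‖T_α φ‖ ≥ C·α^{2/b}·‖φ‖. -/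
open scoped RealInnerProductSpace

theorem stmt_11 {H : Type*} [NormedAddCommGroup H] [InnerProductSpace ℝ H]
    (φ : HilbertBasis ℕ ℝ H) (lam μ : ℕ → ℝ) (C α b : ℝ)
    (hC : 0 < C) (hα : 0 < α) (hb : 2 ≤ b)
    (hlampos : ∀ n, 0 < lam n)
    (hlamtop : Filter.Tendsto lam Filter.atTop Filter.atTop)
    (hμ : ∀ n, μ n ≠ 0) (hμlow : ∀ n, C / (lam n) ^ 2 ≤ |μ n|)
    (g Tg : H)
    (hTg : ∀ n, ⟪Tg, φ n⟫ = (1 + α * (lam n) ^ b) * μ n * ⟪g, φ n⟫) :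
    C * α ^ (2 / b) * ‖g‖ ≤ ‖Tg‖ := by
  have hb0 : (0:ℝ) < b := lt_of_lt_of_le (by norm_num) hb
  set c : ℝ := C * α ^ (2 / b) with hc
  have hc0 : 0 < c := mul_pos hC (Real.rpow_pos_of_pos hα _)
  -- key pointwise bound
  have key : ∀ n, c * |⟪g, φ n⟫| ≤ |⟪Tg, φ n⟫| := by
    intro n
    have hlp := hlampos n
    have hfac : α ^ (2 / b) * (lam n) ^ 2 ≤ 1 + α * (lam n) ^ b := by
      have hp2 : (0:ℝ) ≤ α * (lam n) ^ b :=
        le_of_lt (mul_pos hα (Real.rpow_pos_of_pos hlp b))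
      have hw2 : (0:ℝ) ≤ 2 / b := by positivity
      have hw1 : (0:ℝ) ≤ 1 - 2 / b := by
        have : 2 / b ≤ 1 := by
          rw [div_le_one hb0]; exact hb
        linarith
      have hgm := Real.geom_mean_le_arith_mean2_weighted hw1 hw2 (zero_le_one) hp2
        (by ring)
      have hrw : (α * (lam n) ^ b) ^ (2 / b) = α ^ (2 / b) * (lam n) ^ 2 := by
        rw [Real.mul_rpow (le_of_lt hα) (le_of_lt (Real.rpow_pos_of_pos hlp b)),
          ← Real.rpow_natCast (lam n) 2, ← Real.rpow_mul (le_of_lt hlp)]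
        congr 1
        field_simp
        norm_num
      have h1 : (1:ℝ) ^ (1 - 2 / b) = 1 := Real.one_rpow _
      rw [h1, one_mul, hrw] at hgm
      nlinarith [hgm]
    have hμn := hμlow n
    have h1pos : 0 < 1 + α * (lam n) ^ b := by positivity
    rw [hTg n, abs_mul, abs_mul, abs_of_pos h1pos]
    have : c ≤ (1 + α * (lam n) ^ b) * |μ n| := by
      calc c = C * α ^ (2 / b) := rfl
        _ ≤ C / (lam n) ^ 2 * (1 + α * (lam n) ^ b) := by
            rw [div_mul_eq_mul_div, le_div_iff₀ (by positivity)]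
            calc C * α ^ (2 / b) * (lam n) ^ 2
                = C * (α ^ (2 / b) * (lam n) ^ 2) := by ring
              _ ≤ C * (1 + α * (lam n) ^ b) := by
                  exact mul_le_mul_of_nonneg_left hfac (le_of_lt hC)
              _ = C * (1 + α * (lam n) ^ b) := rfl
        _ ≤ |μ n| * (1 + α * (lam n) ^ b) :=
            mul_le_mul_of_nonneg_right hμn (le_of_lt h1pos)
        _ = (1 + α * (lam n) ^ b) * |μ n| := by ring
    exact mul_le_mul this (le_refl _) (abs_nonneg _) (by positivity)
  -- pass to norms
  have hTrepr : ∀ x : H, ‖x‖ ^ (2:ℝ) = ∑' n, ‖φ.repr x n‖ ^ (2:ℝ) := by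
    intro x
    rw [← φ.repr.norm_map x]
    exact lp.norm_rpow_eq_tsum (by norm_num) (φ.repr x)
  have hsum : Summable (fun n => ‖φ.repr Tg n‖ ^ (2:ℝ)) := by
    have := (lp.memℓp (φ.repr Tg)).summable (p := 2) (by norm_num)
    simpa using this
  have hpt : ∀ n, (c * ‖φ.repr g n‖) ^ (2:ℝ) ≤ ‖φ.repr Tg n‖ ^ (2:ℝ) := by
    intro n
    apply Real.rpow_le_rpow (by positivity) _ (by norm_num)
    have hgi : φ.repr g n = ⟪g, φ n⟫ := by
      rw [φ.repr_apply_apply, real_inner_comm]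
    have hTi : φ.repr Tg n = ⟪Tg, φ n⟫ := by
      rw [φ.repr_apply_apply, real_inner_comm]
    rw [hgi, hTi, Real.norm_eq_abs, Real.norm_eq_abs]
    exact key n
  have hsum2 : (c * ‖g‖) ^ (2:ℝ) ≤ ‖Tg‖ ^ (2:ℝ) := by
    rw [Real.mul_rpow (le_of_lt hc0) (norm_nonneg _), hTrepr g, hTrepr Tg]
    calc c ^ (2:ℝ) * ∑' n, ‖φ.repr g n‖ ^ (2:ℝ)
        = ∑' n, (c * ‖φ.repr g n‖) ^ (2:ℝ) := by
          rw [← tsum_mul_left]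
          congr 1; ext n
          rw [Real.mul_rpow (le_of_lt hc0) (norm_nonneg _)]
      _ ≤ ∑' n, ‖φ.repr Tg n‖ ^ (2:ℝ) := Summable.tsum_le_tsum hpt
          ((hsum.of_nonneg_of_le (fun n => by positivity) hpt)) hsum
  have hpow : (c * ‖g‖) ^ (2:ℕ) ≤ ‖Tg‖ ^ (2:ℕ) := by
    calc (c * ‖g‖) ^ (2:ℕ) = (c * ‖g‖) ^ ((2:ℕ):ℝ) := (Real.rpow_natCast _ 2).symm
      _ = (c * ‖g‖) ^ (2:ℝ) := by norm_num
      _ ≤ ‖Tg‖ ^ (2:ℝ) := hsum2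
      _ = ‖Tg‖ ^ ((2:ℕ):ℝ) := by norm_num
      _ = ‖Tg‖ ^ (2:ℕ) := Real.rpow_natCast _ 2
  exact le_of_pow_le_pow_left₀ two_ne_zero (norm_nonneg Tg) hpow
end

section
/- Under the setting of the quasi-reversibility method, the data-propagation error satisfies: if h, h^δ ∈ H with ‖h - h^δ‖ ≤ δ, b ≥ 2, α > 0, |μ_n| ≥ C/λ_n² with λ_n > 0, and f_α, f_α^δ are defined by Fourier coefficients ⟨h, φ_n⟩/((1+αλ_n^b)μ_n) and ⟨h^δ, φ_n⟩/((1+αλ_n^b)μ_n) respectively, then ‖f_α - f_α^δ‖ ≤ δ/(C·α^{2/b}). -/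
/-!
Each Fourier coefficient of `fα - fαδ` is that of `h - hδ'` divided by `(1 + α λₙ^b) μₙ`, whose
modulus is at least `C α^(2/b)` since `α^(2/b) λₙ^2 = t^(2/b) ≤ 1 + t` for `t = α λₙ^b` and
`2/b ≤ 1`. Parseval's identity turns this coefficientwise bound into the norm bound.
-/

open scoped RealInnerProductSpace

namespace Real

lemma rpow_le_one_add {t p : ℝ} (ht : 0 ≤ t) (hp0 : 0 ≤ p) (hp1 : p ≤ 1) :
    t ^ p ≤ 1 + t := by
  rcases le_total t 1 with hle | hge
  · linarith [rpow_le_one ht hle hp0]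
  · linarith [rpow_le_self_of_one_le hge hp1]

lemma rpow_two_div_mul_sq_le_one_add {α l b : ℝ} (hα : 0 ≤ α) (hl : 0 < l) (hb : 2 ≤ b) :
    α ^ (2 / b) * l ^ 2 ≤ 1 + α * l ^ b := by
  have hb0 : 0 < b := by linarith
  have hrewrite : α ^ (2 / b) * l ^ 2 = (α * l ^ b) ^ (2 / b) := by
    rw [mul_rpow hα (rpow_nonneg hl.le b), ← rpow_mul hl.le, mul_div_cancel₀ _ hb0.ne',
      rpow_two]
  rw [hrewrite]
  exact rpow_le_one_add (by positivity) (by positivity) ((div_le_one hb0).mpr hb)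

end Real

lemma mul_rpow_two_div_le_abs_mul {C α l b m : ℝ} (hα : 0 ≤ α) (hl : 0 < l) (hb : 2 ≤ b)
    (hm : C / l ^ 2 ≤ |m|) :
    C * α ^ (2 / b) ≤ |(1 + α * l ^ b) * m| := by
  have hpos : 0 < 1 + α * l ^ b := by positivity
  have hl2 : 0 < l ^ 2 := by positivity
  rw [abs_mul, abs_of_pos hpos]
  calc C * α ^ (2 / b) = C / l ^ 2 * (α ^ (2 / b) * l ^ 2) := by field_simp
    _ ≤ |m| * (1 + α * l ^ b) :=
      mul_le_mul hm (Real.rpow_two_div_mul_sq_le_one_add hα hl hb) (by positivity)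
        (abs_nonneg m)
    _ = (1 + α * l ^ b) * |m| := mul_comm _ _

namespace HilbertBasis

variable {ι E : Type*} [NormedAddCommGroup E] [InnerProductSpace ℝ E]

lemma norm_le_of_abs_inner_le (φ : HilbertBasis ι ℝ E) {x y : E} {c : ℝ} (hc : 0 ≤ c)
    (hxy : ∀ i, |⟪x, φ i⟫| ≤ c * |⟪y, φ i⟫|) :
    ‖x‖ ≤ c * ‖y‖ := by
  have hx := φ.hasSum_inner_mul_inner x x
  have hy := (φ.hasSum_inner_mul_inner y y).mul_left (c ^ 2)
  have hterm : ∀ i, ⟪x, φ i⟫ * ⟪φ i, x⟫ ≤ c ^ 2 * (⟪y, φ i⟫ * ⟪φ i, y⟫) := fun i => by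
    rw [real_inner_comm x, real_inner_comm y, ← sq, ← sq, ← mul_pow, ← sq_abs, ← sq_abs (_ * _),
      abs_mul, abs_of_nonneg hc]
    exact pow_le_pow_left₀ (abs_nonneg _) (hxy i) 2
  have hsq : ‖x‖ ^ 2 ≤ (c * ‖y‖) ^ 2 := by
    rw [← real_inner_self_eq_norm_sq, mul_pow, ← real_inner_self_eq_norm_sq]
    exact hasSum_le hterm hx hy
  exact (pow_le_pow_iff_left₀ (norm_nonneg x) (by positivity) two_ne_zero).mp hsq

end HilbertBasis

theorem stmt_12_general {H : Type*} [NormedAddCommGroup H] [InnerProductSpace ℝ H]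
    (φ : HilbertBasis ℕ ℝ H) (lam μ : ℕ → ℝ) (C α b δ : ℝ)
    (hC : 0 < C) (hα : 0 < α) (hb : 2 ≤ b)
    (hlampos : ∀ n, 0 < lam n)
    (hμlow : ∀ n, C / (lam n) ^ 2 ≤ |μ n|)
    (h hδ' fα fαδ : H)
    (hnoise : ‖h - hδ'‖ ≤ δ)
    (hfα : ∀ n, ⟪fα, φ n⟫ = ⟪h, φ n⟫ / ((1 + α * (lam n) ^ b) * μ n))
    (hfαδ : ∀ n, ⟪fαδ, φ n⟫ = ⟪hδ', φ n⟫ / ((1 + α * (lam n) ^ b) * μ n)) :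
    ‖fα - fαδ‖ ≤ δ / (C * α ^ (2 / b)) := by
  have hK : 0 < C * α ^ (2 / b) := mul_pos hC (Real.rpow_pos_of_pos hα _)
  have hcoeff : ∀ n, |⟪fα - fαδ, φ n⟫| ≤ (C * α ^ (2 / b))⁻¹ * |⟪h - hδ', φ n⟫| := fun n => by
    rw [inner_sub_left, inner_sub_left, hfα, hfαδ, ← sub_div, abs_div, ← div_eq_inv_mul]
    exact div_le_div_of_nonneg_left (abs_nonneg _) hK
      (mul_rpow_two_div_le_abs_mul hα.le (hlampos n) hb (hμlow n))
  calc ‖fα - fαδ‖ ≤ (C * α ^ (2 / b))⁻¹ * ‖h - hδ'‖ :=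
        φ.norm_le_of_abs_inner_le (inv_nonneg.mpr hK.le) hcoeff
    _ ≤ (C * α ^ (2 / b))⁻¹ * δ := by gcongr
    _ = δ / (C * α ^ (2 / b)) := inv_mul_eq_div _ _

theorem stmt_12 {H : Type*} [NormedAddCommGroup H] [InnerProductSpace ℝ H]
    (φ : HilbertBasis ℕ ℝ H) (lam μ : ℕ → ℝ) (C α b δ : ℝ)
    (hC : 0 < C) (hα : 0 < α) (hb : 2 ≤ b) (hδ : 0 < δ)
    (hlampos : ∀ n, 0 < lam n)
    (hμ : ∀ n, μ n ≠ 0) (hμlow : ∀ n, C / (lam n) ^ 2 ≤ |μ n|)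
    (h hδ' fα fαδ : H)
    (hnoise : ‖h - hδ'‖ ≤ δ)
    (hfα : ∀ n, ⟪fα, φ n⟫ = ⟪h, φ n⟫ / ((1 + α * (lam n) ^ b) * μ n))
    (hfαδ : ∀ n, ⟪fαδ, φ n⟫ = ⟪hδ', φ n⟫ / ((1 + α * (lam n) ^ b) * μ n)) :
    ‖fα - fαδ‖ ≤ δ / (C * α ^ (2 / b)) :=
  stmt_12_general φ lam μ C α b δ hC hα hb hlampos hμlow h hδ' fα fαδ hnoise hfα hfαδ
end

section
/- Let f ∈ H with Σ_n λ_n^{2p}|⟨f, φ_n⟩|² ≤ ϱ², 0 < p < b, α > 0, and define f_α by ⟨f_α, φ_n⟩ = ⟨f, φ_n⟩/(1 + α·λ_n^b). Then ‖f - f_α‖ ≤ (p/b)·((b-p)/p)^{(b-p)/b}·ϱ·α^{p/b}. -/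
open scoped RealInnerProductSpace

theorem stmt_13 {H : Type*} [NormedAddCommGroup H] [InnerProductSpace ℝ H]
    (φ : HilbertBasis ℕ ℝ H) (lam : ℕ → ℝ) (p b α ϱ : ℝ)
    (hp : 0 < p) (hpb : p < b) (hα : 0 < α) (hϱ : 0 < ϱ)
    (hlampos : ∀ n, 0 < lam n)
    (f fα : H)
    (hsum : Summable (fun n => (lam n) ^ (2 * p) * |⟪f, φ n⟫|^2))
    (hsrc : ∑' n, (lam n) ^ (2 * p) * |⟪f, φ n⟫|^2 ≤ ϱ ^ 2)
    (hfα : ∀ n, ⟪fα, φ n⟫ = ⟪f, φ n⟫ / (1 + α * (lam n) ^ b)) :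
    ‖f - fα‖ ≤ (p / b) * ((b - p) / p) ^ ((b - p) / b) * ϱ * α ^ (p / b) := by
  have hb : (0:ℝ) < b := hp.trans hpb
  have hbp : (0:ℝ) < b - p := by linarith
  set C : ℝ := (p / b) * ((b - p) / p) ^ ((b - p) / b) with hCdef
  have hCpos : 0 < C :=
    mul_pos (div_pos hp hb) (Real.rpow_pos_of_pos (div_pos hbp hp) _)
  -- key scalar inequality
  have key : ∀ s : ℝ, 0 < s → s ^ ((b - p) / b) ≤ C * (1 + s) := by
    intro s hs
    set k : ℝ := (b - p) / p with hkdef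
    have hk : 0 < k := div_pos hbp hp
    have hw1 : (0:ℝ) ≤ (b - p) / b := (div_pos hbp hb).le
    have hw2 : (0:ℝ) ≤ p / b := (div_pos hp hb).le
    have hwsum : (b - p) / b + p / b = 1 := by field_simp; ring
    have hgm := Real.geom_mean_le_arith_mean2_weighted hw1 hw2
      (div_pos hs hk).le zero_le_one hwsum
    rw [Real.one_rpow, mul_one, mul_one] at hgm
    have hdiv : (s / k) ^ ((b - p) / b) = s ^ ((b - p) / b) / k ^ ((b - p) / b) :=
      Real.div_rpow hs.le hk.le _
    rw [hdiv] at hgm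
    have hkpow : 0 < k ^ ((b - p) / b) := Real.rpow_pos_of_pos hk _
    have h2 : s ^ ((b - p) / b) ≤ k ^ ((b - p) / b) * ((b - p) / b * (s / k) + p / b) := by
      rw [div_le_iff₀ hkpow] at hgm
      linarith [hgm]
    have h3 : (b - p) / b * (s / k) + p / b = p / b * (1 + s) := by
      rw [hkdef]; field_simp; ring
    rw [h3] at h2
    calc s ^ ((b - p) / b) ≤ k ^ ((b - p) / b) * (p / b * (1 + s)) := h2
      _ = C * (1 + s) := by rw [hCdef, hkdef]; ring
  -- per-term bound
  have hterm : ∀ n, ⟪f - fα, φ n⟫ ^ 2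
      ≤ (C * α ^ (p / b)) ^ 2 * ((lam n) ^ (2 * p) * |⟪f, φ n⟫| ^ 2) := by
    intro n
    set s : ℝ := α * (lam n) ^ b with hsdef
    have hs : 0 < s := mul_pos hα (Real.rpow_pos_of_pos (hlampos n) _)
    have h1s : (0:ℝ) < 1 + s := by linarith
    have hinner : ⟪f - fα, φ n⟫ = ⟪f, φ n⟫ * (s / (1 + s)) := by
      rw [inner_sub_left, hfα n, ← hsdef]
      rw [mul_div_assoc', eq_div_iff h1s.ne', sub_mul, div_mul_cancel₀ _ h1s.ne']; ring
    have hratio : s / (1 + s) ≤ C * (α ^ (p / b) * (lam n) ^ p) := by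
      have hsplit : s = s ^ (p / b) * s ^ ((b - p) / b) := by
        rw [← Real.rpow_add hs]
        rw [show p / b + (b - p) / b = 1 by field_simp; ring, Real.rpow_one]
      have hsp : 0 < s ^ (p / b) := Real.rpow_pos_of_pos hs _
      have : s / (1 + s) ≤ s ^ (p / b) * C := by
        rw [div_le_iff₀ h1s]
        calc s = s ^ (p / b) * s ^ ((b - p) / b) := hsplit
          _ ≤ s ^ (p / b) * (C * (1 + s)) :=
              mul_le_mul_of_nonneg_left (key s hs) hsp.le
          _ = s ^ (p / b) * C * (1 + s) := by ring
      have hspeq : s ^ (p / b) = α ^ (p / b) * (lam n) ^ p := by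
        rw [hsdef, Real.mul_rpow hα.le (Real.rpow_pos_of_pos (hlampos n) b).le,
          ← Real.rpow_mul (hlampos n).le, show b * (p / b) = p from by field_simp]
      rw [hspeq] at this
      linarith [this]
    have hratnn : (0:ℝ) ≤ s / (1 + s) := div_nonneg hs.le h1s.le
    have hClam : 0 ≤ C * (α ^ (p / b) * (lam n) ^ p) := mul_nonneg hCpos.le (mul_nonneg (Real.rpow_pos_of_pos hα _).le (Real.rpow_pos_of_pos (hlampos n) _).le)
    have hsq : (s / (1 + s)) ^ 2 ≤ (C * (α ^ (p / b) * (lam n) ^ p)) ^ 2 :=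
      pow_le_pow_left₀ hratnn hratio 2
    have hlam2 : ((lam n) ^ p) ^ 2 = (lam n) ^ (2 * p) := by
      rw [← Real.rpow_natCast ((lam n) ^ p) 2, ← Real.rpow_mul (hlampos n).le]
      norm_num [mul_comm]
    calc ⟪f - fα, φ n⟫ ^ 2 = ⟪f, φ n⟫ ^ 2 * (s / (1 + s)) ^ 2 := by rw [hinner]; ring
      _ ≤ ⟪f, φ n⟫ ^ 2 * (C * (α ^ (p / b) * (lam n) ^ p)) ^ 2 := by
          apply mul_le_mul_of_nonneg_left hsq (sq_nonneg _)
      _ = (C * α ^ (p / b)) ^ 2 * ((lam n) ^ (2 * p) * |⟪f, φ n⟫| ^ 2) := by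
          rw [← hlam2, sq_abs]; ring
  -- Parseval
  have hPars : HasSum (fun n => ⟪f - fα, φ n⟫ ^ 2) (‖f - fα‖ ^ 2) := by
    have := φ.hasSum_inner_mul_inner (f - fα) (f - fα)
    simp only [real_inner_comm (f - fα), ← sq] at this
    rwa [real_inner_self_eq_norm_sq] at this
  have hsum2 : Summable (fun n =>
      (C * α ^ (p / b)) ^ 2 * ((lam n) ^ (2 * p) * |⟪f, φ n⟫| ^ 2)) :=
    hsum.mul_left _
  have hnorm2 : ‖f - fα‖ ^ 2 ≤ (C * ϱ * α ^ (p / b)) ^ 2 := by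
    rw [← hPars.tsum_eq]
    calc ∑' n, ⟪f - fα, φ n⟫ ^ 2
        ≤ ∑' n, (C * α ^ (p / b)) ^ 2 * ((lam n) ^ (2 * p) * |⟪f, φ n⟫| ^ 2) :=
          Summable.tsum_le_tsum hterm hPars.summable hsum2
      _ = (C * α ^ (p / b)) ^ 2 * ∑' n, (lam n) ^ (2 * p) * |⟪f, φ n⟫| ^ 2 :=
          tsum_mul_left
      _ ≤ (C * α ^ (p / b)) ^ 2 * ϱ ^ 2 := by
          apply mul_le_mul_of_nonneg_left hsrc (sq_nonneg _)
      _ = (C * ϱ * α ^ (p / b)) ^ 2 := by ring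
  have hR : (0:ℝ) ≤ C * ϱ * α ^ (p / b) := mul_nonneg (mul_nonneg hCpos.le hϱ.le) (by positivity)
  have hfin := Real.sqrt_le_sqrt hnorm2
  rwa [Real.sqrt_sq (norm_nonneg _), Real.sqrt_sq hR] at hfin
end

section
/- Let f ∈ H with Σ_n λ_n^{2p}|⟨f, φ_n⟩|² ≤ ϱ², where λ_n ≥ λ₁ > 0 is nondecreasing, p ≥ b > 0, α > 0, and define f_α by ⟨f_α, φ_n⟩ = ⟨f, φ_n⟩/(1 + α·λ_n^b). Then ‖f - f_α‖ ≤ λ₁^{b-p}·ϱ·α. -/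
/-!
The residual f - fα has coefficients ⟪f, φ n⟫ · αλₙᵇ/(1 + αλₙᵇ), and
αλₙᵇ/(1 + αλₙᵇ) ≤ αλₙᵇ = αλₙᵖ · λₙ^(b-p) ≤ α λ₁^(b-p) λₙᵖ since b ≤ p and λₙ ≥ λ₁.
Parseval then bounds ‖f - fα‖² by (λ₁^(b-p) α)² Σ λₙ^(2p) |⟪f, φ n⟫|² ≤ (λ₁^(b-p) α ϱ)².
-/

open scoped RealInnerProductSpace

namespace HilbertBasis

variable {ι 𝕜 H : Type*} [RCLike 𝕜] [NormedAddCommGroup H] [InnerProductSpace 𝕜 H]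

theorem hasSum_norm_inner_sq (φ : HilbertBasis ι 𝕜 H) (x : H) :
    HasSum (fun i => ‖inner 𝕜 (φ i) x‖ ^ 2) (‖x‖ ^ 2) := by
  have h := (φ.hasSum_inner_mul_inner x x).mapL (RCLike.reCLM (K := 𝕜))
  simp only [RCLike.reCLM_apply, inner_self_eq_norm_sq] at h
  refine h.congr_fun fun i => ?_
  rw [← inner_conj_symm x (φ i), RCLike.conj_mul]
  norm_cast

theorem norm_sq_le_tsum_of_norm_inner_sq_le (φ : HilbertBasis ι 𝕜 H) {x : H} {w : ι → ℝ}
    (hw : Summable w) (h : ∀ i, ‖inner 𝕜 (φ i) x‖ ^ 2 ≤ w i) : ‖x‖ ^ 2 ≤ ∑' i, w i :=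
  hasSum_le h (φ.hasSum_norm_inner_sq x) hw.hasSum

end HilbertBasis

theorem Real.rpow_le_rpow_sub_mul_rpow {l₁ l b p : ℝ} (hl₁ : 0 < l₁) (hl : l₁ ≤ l)
    (hbp : b ≤ p) : l ^ b ≤ l₁ ^ (b - p) * l ^ p := by
  have hl_pos : 0 < l := hl₁.trans_le hl
  calc l ^ b = l ^ (b - p) * l ^ p := by rw [← Real.rpow_add hl_pos, sub_add_cancel]
    _ ≤ l₁ ^ (b - p) * l ^ p :=
      mul_le_mul_of_nonneg_right (Real.rpow_le_rpow_of_nonpos hl₁ hl (by linarith)) (by positivity)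

theorem sq_sub_div_one_add_rpow_le {α l₁ l b p c : ℝ} (hα : 0 ≤ α) (hl₁ : 0 < l₁)
    (hl : l₁ ≤ l) (hbp : b ≤ p) :
    (c - c / (1 + α * l ^ b)) ^ 2 ≤ (l₁ ^ (b - p) * α) ^ 2 * (l ^ (2 * p) * |c| ^ 2) := by
  have hl_pos : 0 < l := hl₁.trans_le hl
  have hx : 0 ≤ α * l ^ b := by positivity
  have hresidual : c - c / (1 + α * l ^ b) = c * (α * l ^ b / (1 + α * l ^ b)) := by
    field_simp
    ring
  have hfactor : α * l ^ b / (1 + α * l ^ b) ≤ l₁ ^ (b - p) * α * l ^ p :=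
    calc α * l ^ b / (1 + α * l ^ b) ≤ α * l ^ b := div_le_self hx (by linarith)
      _ ≤ α * (l₁ ^ (b - p) * l ^ p) := by
        gcongr
        exact Real.rpow_le_rpow_sub_mul_rpow hl₁ hl hbp
      _ = l₁ ^ (b - p) * α * l ^ p := by ring
  calc (c - c / (1 + α * l ^ b)) ^ 2 = |c| ^ 2 * (α * l ^ b / (1 + α * l ^ b)) ^ 2 := by
        rw [hresidual, mul_pow, sq_abs]
    _ ≤ |c| ^ 2 * (l₁ ^ (b - p) * α * l ^ p) ^ 2 := by gcongr
    _ = (l₁ ^ (b - p) * α) ^ 2 * (l ^ (2 * p) * |c| ^ 2) := by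
        rw [mul_comm 2 p, Real.rpow_mul hl_pos.le, Real.rpow_two]
        ring

theorem stmt_14_general {H : Type*} [NormedAddCommGroup H] [InnerProductSpace ℝ H]
    (φ : HilbertBasis ℕ ℝ H) (lam : ℕ → ℝ) (lam1 p b α ϱ : ℝ)
    (hpb : b ≤ p) (hα : 0 < α) (hϱ : 0 < ϱ) (hlam1 : 0 < lam1)
    (hlamlow : ∀ n, lam1 ≤ lam n)
    (f fα : H)
    (hsum : Summable (fun n => (lam n) ^ (2 * p) * |⟪f, φ n⟫|^2))
    (hsrc : ∑' n, (lam n) ^ (2 * p) * |⟪f, φ n⟫|^2 ≤ ϱ ^ 2)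
    (hfα : ∀ n, ⟪fα, φ n⟫ = ⟪f, φ n⟫ / (1 + α * (lam n) ^ b)) :
    ‖f - fα‖ ≤ lam1 ^ (b - p) * ϱ * α := by
  set K := lam1 ^ (b - p) * α
  have hcoeff : ∀ n, ‖⟪φ n, f - fα⟫‖ ^ 2 ≤ K ^ 2 * ((lam n) ^ (2 * p) * |⟪f, φ n⟫| ^ 2) := by
    intro n
    rw [Real.norm_eq_abs, sq_abs, real_inner_comm, inner_sub_left, hfα]
    exact sq_sub_div_one_add_rpow_le hα.le hlam1 (hlamlow n) hpb
  have hnorm_sq : ‖f - fα‖ ^ 2 ≤ (lam1 ^ (b - p) * ϱ * α) ^ 2 :=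
    calc ‖f - fα‖ ^ 2 ≤ ∑' n, K ^ 2 * ((lam n) ^ (2 * p) * |⟪f, φ n⟫| ^ 2) :=
          φ.norm_sq_le_tsum_of_norm_inner_sq_le (hsum.mul_left _) hcoeff
      _ = K ^ 2 * ∑' n, (lam n) ^ (2 * p) * |⟪f, φ n⟫| ^ 2 := tsum_mul_left
      _ ≤ K ^ 2 * ϱ ^ 2 := by gcongr
      _ = (lam1 ^ (b - p) * ϱ * α) ^ 2 := by ring
  exact le_of_pow_le_pow_left₀ two_ne_zero (by positivity) hnorm_sq

theorem stmt_14 {H : Type*} [NormedAddCommGroup H] [InnerProductSpace ℝ H]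
    (φ : HilbertBasis ℕ ℝ H) (lam : ℕ → ℝ) (lam1 p b α ϱ : ℝ)
    (hb : 0 < b) (hpb : b ≤ p) (hα : 0 < α) (hϱ : 0 < ϱ) (hlam1 : 0 < lam1)
    (hlamlow : ∀ n, lam1 ≤ lam n) (hlammono : Monotone lam)
    (f fα : H)
    (hsum : Summable (fun n => (lam n) ^ (2 * p) * |⟪f, φ n⟫|^2))
    (hsrc : ∑' n, (lam n) ^ (2 * p) * |⟪f, φ n⟫|^2 ≤ ϱ ^ 2)
    (hfα : ∀ n, ⟪fα, φ n⟫ = ⟪f, φ n⟫ / (1 + α * (lam n) ^ b)) :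
    ‖f - fα‖ ≤ lam1 ^ (b - p) * ϱ * α :=
  stmt_14_general φ lam lam1 p b α ϱ hpb hα hϱ hlam1 hlamlow f fα hsum hsrc hfα
end

section
/- Let T be a compact positive self-adjoint operator on a Hilbert space H with eigenvalues σ_n > 0 (with respect to an orthonormal basis of eigenvectors), let p > 0, r > 0, and define the source set M = {g ∈ H : g = T^{p/2} g̃ for some g̃ with ‖g̃‖ ≤ r}. If δ > 0 satisfies δ²/r² = σ_N^{p+2} for some N (i.e., δ²/r² lies in the point spectrum of T^{p+2}), then the modulus of continuity ω(δ, M) := sup{‖f₁ - f₂‖ : f₁, f₂ ∈ M, ‖T f₁ - T f₂‖ ≤ δ} satisfies ω(δ, M) ≥ r^{2/(p+2)}·δ^{p/(p+2)}; indeed the element f = r·σ_N^{p/2}·e_N (e_N the N-th eigenvector) belongs to M, satisfies ‖T f‖ ≤ δ, and ‖f‖ = r^{2/(p+2)}·δ^{p/(p+2)}. -/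
open scoped RealInnerProductSpace

theorem stmt_17 {H : Type*} [NormedAddCommGroup H] [InnerProductSpace ℝ H]
    (e : HilbertBasis ℕ ℝ H) (σ : ℕ → ℝ) (T : H →L[ℝ] H)
    (hσpos : ∀ n, 0 < σ n)
    (hT : ∀ n, T (e n) = σ n • e n)
    (p r δ : ℝ) (hp : 0 < p) (hr : 0 < r) (hδ : 0 < δ)
    (M : Set H)
    (hM : M = {g : H | ∃ gt : H, ‖gt‖ ≤ r ∧ ∀ n, ⟪g, e n⟫ = (σ n) ^ (p / 2) * ⟪gt, e n⟫})
    (N : ℕ) (hspec : δ ^ 2 / r ^ 2 = (σ N) ^ (p + 2)) :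
    (r * (σ N) ^ (p / 2)) • (e N : H) ∈ M ∧
    ‖T ((r * (σ N) ^ (p / 2)) • (e N : H))‖ ≤ δ ∧
    ‖(r * (σ N) ^ (p / 2)) • (e N : H)‖ = r ^ (2 / (p + 2)) * δ ^ (p / (p + 2)) ∧
    r ^ (2 / (p + 2)) * δ ^ (p / (p + 2)) ≤
      sSup {x : ℝ | ∃ f₁ ∈ M, ∃ f₂ ∈ M, ‖T f₁ - T f₂‖ ≤ δ ∧ x = ‖f₁ - f₂‖} := by
  have hσN := hσpos N
  have hnorm1 : ∀ n, ‖(e n : H)‖ = 1 := fun n => e.orthonormal.1 n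
  have hite : ∀ i j : ℕ, ⟪(e i : H), e j⟫ = if i = j then (1:ℝ) else 0 :=
    fun i j => orthonormal_iff_ite.mp e.orthonormal i j
  have hp2 : (0:ℝ) < p + 2 := by linarith
  have hσrpow : (0:ℝ) < σ N ^ ((p + 2) / 2) := Real.rpow_pos_of_pos hσN _
  have hδsq : δ ^ 2 = (r * σ N ^ ((p + 2) / 2)) ^ 2 := by
    have h1 : δ ^ 2 = r ^ 2 * σ N ^ (p + 2) := by
      field_simp at hspec; linarith [hspec]
    have h2 : (σ N ^ ((p + 2) / 2)) ^ 2 = σ N ^ (p + 2) := by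
      rw [← Real.rpow_natCast (σ N ^ ((p + 2) / 2)) 2, ← Real.rpow_mul hσN.le]
      norm_num
    rw [mul_pow, h2, h1]
  have hδeq : δ = r * σ N ^ ((p + 2) / 2) := by
    have h := (Real.sqrt_sq hδ.le).symm
    rw [hδsq, Real.sqrt_sq (by positivity)] at h
    exact h
  set f : H := (r * (σ N) ^ (p / 2)) • (e N : H) with hf
  -- part 1 : membership
  have hmem : f ∈ M := by
    rw [hM]
    refine ⟨r • (e N : H), ?_, fun n => ?_⟩
    · rw [norm_smul, hnorm1, mul_one, Real.norm_eq_abs, abs_of_pos hr]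
    · rw [hf, real_inner_smul_left, real_inner_smul_left, hite]
      by_cases h : N = n
      · subst h; simp; ring
      · simp [h]
  -- norm of f
  have hnf : ‖f‖ = r * σ N ^ (p / 2) := by
    rw [hf, norm_smul, hnorm1, mul_one, Real.norm_eq_abs, abs_of_pos (by positivity)]
  -- part 2 : ‖T f‖ = δ
  have hTf : ‖T f‖ = δ := by
    have h : T f = (r * σ N ^ (p / 2) * σ N) • (e N : H) := by
      rw [hf, map_smul, hT, smul_smul]
    have hσp2 : (0:ℝ) < σ N ^ (p / 2) := Real.rpow_pos_of_pos hσN _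
    rw [h, norm_smul, hnorm1, mul_one, Real.norm_eq_abs,
      abs_of_pos (mul_pos (mul_pos hr hσp2) hσN), hδeq, mul_assoc]
    congr 1
    rw [show (p + 2) / 2 = p / 2 + 1 by ring, Real.rpow_add hσN, Real.rpow_one]
  -- part 3 : norm identity
  have hnfval : ‖f‖ = r ^ (2 / (p + 2)) * δ ^ (p / (p + 2)) := by
    rw [hnf, hδeq, Real.mul_rpow hr.le hσrpow.le, ← Real.rpow_mul hσN.le]
    have h1 : (p + 2) / 2 * (p / (p + 2)) = p / 2 := by
      have : p + 2 ≠ 0 := by linarith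
      field_simp
    rw [h1, ← mul_assoc, ← Real.rpow_add hr]
    have h2 : 2 / (p + 2) + p / (p + 2) = 1 := by
      have : p + 2 ≠ 0 := by linarith
      field_simp; ring
    rw [h2, Real.rpow_one]
  refine ⟨hmem, le_of_eq hTf, hnfval, ?_⟩
  -- part 4 : sSup bound
  have hzero : (0:H) ∈ M := by
    rw [hM]; exact ⟨0, by simp [hr.le], fun n => by simp⟩
  have hboundM : ∀ g ∈ M, ‖g‖ ≤ r * ‖T‖ ^ (p / 2) := by
    intro g hg
    rw [hM] at hg
    obtain ⟨gt, hgt, hin⟩ := hg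
    have hσle : ∀ n, σ n ≤ ‖T‖ := by
      intro n
      have h := T.le_opNorm (e n)
      rw [hT n, norm_smul] at h
      simp only [hnorm1, mul_one, Real.norm_eq_abs, abs_of_pos (hσpos n)] at h
      exact h
    have hTnn : (0:ℝ) ≤ ‖T‖ := norm_nonneg _
    have hg2 : ⟪g, g⟫ = ∑' n, ⟪g, e n⟫ * ⟪(e n : H), g⟫ :=
      (e.tsum_inner_mul_inner g g).symm
    have hgt2 : ⟪gt, gt⟫ = ∑' n, ⟪gt, e n⟫ * ⟪(e n : H), gt⟫ :=
      (e.tsum_inner_mul_inner gt gt).symm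
    have hsymm : ∀ (x : H) n, ⟪(e n : H), x⟫ = ⟪x, e n⟫ := fun x n =>
      real_inner_comm _ _
    have hpt : ∀ n, ⟪g, e n⟫ * ⟪(e n : H), g⟫ ≤
        (‖T‖ ^ (p / 2)) ^ 2 * (⟪gt, e n⟫ * ⟪(e n : H), gt⟫) := by
      intro n
      rw [hsymm g, hsymm gt, hin n]
      have h1 : (0:ℝ) ≤ σ n ^ (p / 2) := (Real.rpow_pos_of_pos (hσpos n) _).le
      have h2 : σ n ^ (p / 2) ≤ ‖T‖ ^ (p / 2) :=
        Real.rpow_le_rpow (hσpos n).le (hσle n) (by positivity)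
      nlinarith [mul_self_le_mul_self h1 h2, sq_nonneg (⟪gt, e n⟫ : ℝ)]
    have hle : ∑' n, ⟪g, e n⟫ * ⟪(e n : H), g⟫ ≤
        ∑' n, (‖T‖ ^ (p / 2)) ^ 2 * (⟪gt, e n⟫ * ⟪(e n : H), gt⟫) :=
      Summable.tsum_le_tsum hpt (e.summable_inner_mul_inner g g)
        ((e.summable_inner_mul_inner gt gt).mul_left _)
    rw [tsum_mul_left, ← hgt2] at hle
    have h3 : ‖g‖ ^ 2 ≤ (‖T‖ ^ (p / 2)) ^ 2 * ‖gt‖ ^ 2 := by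
      calc ‖g‖ ^ 2 = ⟪g, g⟫ := (real_inner_self_eq_norm_sq g).symm
        _ ≤ (‖T‖ ^ (p / 2)) ^ 2 * ⟪gt, gt⟫ := by rw [hg2]; exact hle
        _ = (‖T‖ ^ (p / 2)) ^ 2 * ‖gt‖ ^ 2 := by rw [real_inner_self_eq_norm_sq]
    have h4 : ‖g‖ ^ 2 ≤ (r * ‖T‖ ^ (p / 2)) ^ 2 := by
      nlinarith [h3, mul_self_le_mul_self (norm_nonneg gt) hgt,
        sq_nonneg (‖T‖ ^ (p / 2))]
    exact le_of_pow_le_pow_left₀ two_ne_zero (by positivity) h4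
  have hbdd : BddAbove {x : ℝ | ∃ f₁ ∈ M, ∃ f₂ ∈ M, ‖T f₁ - T f₂‖ ≤ δ ∧ x = ‖f₁ - f₂‖} := by
    refine ⟨2 * (r * ‖T‖ ^ (p / 2)), ?_⟩
    rintro x ⟨f₁, h₁, f₂, h₂, -, rfl⟩
    calc ‖f₁ - f₂‖ ≤ ‖f₁‖ + ‖f₂‖ := norm_sub_le _ _
      _ ≤ 2 * (r * ‖T‖ ^ (p / 2)) := by linarith [hboundM f₁ h₁, hboundM f₂ h₂]
  have hmem' : r ^ (2 / (p + 2)) * δ ^ (p / (p + 2)) ∈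
      {x : ℝ | ∃ f₁ ∈ M, ∃ f₂ ∈ M, ‖T f₁ - T f₂‖ ≤ δ ∧ x = ‖f₁ - f₂‖} := by
    refine ⟨f, hmem, 0, hzero, ?_, ?_⟩
    · simp only [map_zero, sub_zero]; exact le_of_eq hTf
    · rw [sub_zero, hnfval]
  exact le_csSup hbdd hmem'
end
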